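/- For the program P = { edb(a). ; q(X) ∨ p(X) :- edb(X). ; co(X) :- q(X), not co(X). } and the query q(a)?, the Dynamic Magic Set rewriting DMS(q(a)?, P) = { edb(a). ; magic_q^b(a). ; magic_p^b(X) :- magic_q^b(X). ; magic_q^b(X) :- magic_p^b(X). ; q(X) ∨ p(X) :- magic_q^b(X), magic_p^b(X), edb(X). } has exactly the two answer sets {magic_q^b(a), magic_p^b(a), edb(a), p(a)} and {magic_q^b(a), magic_p^b(a), edb(a), q(a)}; hence q(a) is a brave consequence of DMS(q(a)?, P) but not of P, so DMS is not sound for brave reasoning on programs that are not super-consistent. -/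
import Mathlib


/-- A ground disjunctive rule: `head` is the (nonempty) set of head atoms,
`pos` the set of positive body atoms, and `neg` the set of atoms occurring
negated in the body. -/
structure GRule (Atom : Type) where
  head : Set Atom
  pos : Set Atom
  neg : Set Atom
  head_nonempty : head.Nonempty

/-- The fact `a.` (a rule with singleton head and empty body). -/
def GRule.fact {Atom : Type} (a : Atom) : GRule Atom :=
  ⟨{a}, ∅, ∅, Set.singleton_nonempty a⟩

/-- An interpretation `I` satisfies a ground rule `r`: some head atom is true
in `I` whenever all positive body atoms are in `I` and no negated body atom is in `I`. -/
def satisfiesRule {Atom : Type} (I : Set Atom) (r : GRule Atom) : Prop :=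
  r.pos ⊆ I → r.neg ∩ I = ∅ → (r.head ∩ I).Nonempty

/-- `I` is a model of the ground program `P`. -/
def isModel {Atom : Type} (I : Set Atom) (P : Set (GRule Atom)) : Prop :=
  ∀ r ∈ P, satisfiesRule I r

/-- The Gelfond–Lifschitz reduct `ground(P)^I`: delete rules whose negated body
atoms intersect `I`, and remove the negative literals from the remaining rules. -/
def reduct {Atom : Type} (P : Set (GRule Atom)) (I : Set Atom) : Set (GRule Atom) :=
  { r' | ∃ r ∈ P, r.neg ∩ I = ∅ ∧ r' = ⟨r.head, r.pos, ∅, r.head_nonempty⟩ }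

/-- `M` is an answer set of `P` iff `M` is a subset-minimal model of `ground(P)^M`. -/
def isAnswerSet {Atom : Type} (P : Set (GRule Atom)) (M : Set Atom) : Prop :=
  isModel M (reduct P M) ∧ ∀ N : Set Atom, N ⊆ M → isModel N (reduct P M) → N = M

/-- The ground atoms `edb(a)`, `q(a)`, `p(a)`, `co(a)` of the example program
together with the magic atoms `magic_q^b(a)` and `magic_p^b(a)`
(the universe is `{a}`, so grounding is the identity). -/
inductive ExAtom : Type
  | edba : ExAtom
  | qa : ExAtom
  | pa : ExAtom
  | coa : ExAtom
  | mqa : ExAtom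
  | mpa : ExAtom
deriving DecidableEq

open ExAtom

/-- The program `P = { edb(a). ; q(X) ∨ p(X) :- edb(X). ; co(X) :- q(X), not co(X). }`. -/
def origProg : Set (GRule ExAtom) :=
  {GRule.fact edba,
   ⟨{qa, pa}, {edba}, ∅, Set.insert_nonempty _ _⟩,
   ⟨{coa}, {qa}, {coa}, Set.singleton_nonempty _⟩}

/-- The rewritten program `DMS(q(a)?, P) = { edb(a). ; magic_q^b(a). ;
magic_p^b(X) :- magic_q^b(X). ; magic_q^b(X) :- magic_p^b(X). ;
q(X) ∨ p(X) :- magic_q^b(X), magic_p^b(X), edb(X). }`. -/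
def dmsProg : Set (GRule ExAtom) :=
  {GRule.fact edba,
   GRule.fact mqa,
   ⟨{mpa}, {mqa}, ∅, Set.singleton_nonempty _⟩,
   ⟨{mqa}, {mpa}, ∅, Set.singleton_nonempty _⟩,
   ⟨{qa, pa}, {mqa, mpa, edba}, ∅, Set.insert_nonempty _ _⟩}

lemma reduct_dms (M : Set ExAtom) : reduct dmsProg M = dmsProg := by
  ext r
  constructor
  · rintro ⟨s, hs, -, rfl⟩
    simp only [dmsProg, Set.mem_insert_iff, Set.mem_singleton_iff] at hs ⊢
    rcases hs with rfl | rfl | rfl | rfl | rfl <;> simp [GRule.fact]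
  · intro hr
    refine ⟨r, hr, ?_, ?_⟩ <;>
    · simp only [dmsProg, Set.mem_insert_iff, Set.mem_singleton_iff] at hr
      rcases hr with rfl | rfl | rfl | rfl | rfl <;> simp [GRule.fact]

lemma model_dms_iff (M : Set ExAtom) :
    isModel M dmsProg ↔ (edba ∈ M ∧ mqa ∈ M ∧ mpa ∈ M ∧ (qa ∈ M ∨ pa ∈ M)) := by
  constructor
  · intro h
    have h1 := h (GRule.fact edba) (by simp [dmsProg])
    have h2 := h (GRule.fact mqa) (by simp [dmsProg])
    have h3 := h ⟨{mpa}, {mqa}, ∅, Set.singleton_nonempty _⟩ (by simp [dmsProg])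
    have h5 := h ⟨{qa, pa}, {mqa, mpa, edba}, ∅, Set.insert_nonempty _ _⟩ (by simp [dmsProg])
    simp only [satisfiesRule, GRule.fact, Set.empty_subset, Set.empty_inter,
      Set.singleton_inter_nonempty, Set.singleton_subset_iff, Set.insert_subset_iff,
      forall_true_left] at h1 h2 h3 h5
    have hedba := h1
    have hmqa := h2
    have hmpa := h3 hmqa
    have h5' := h5 ⟨hmqa, hmpa, hedba⟩
    refine ⟨hedba, hmqa, hmpa, ?_⟩
    rcases h5' with ⟨x, hx1, hx2⟩
    simp only [Set.mem_insert_iff, Set.mem_singleton_iff] at hx1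
    rcases hx1 with rfl | rfl
    · exact Or.inl hx2
    · exact Or.inr hx2
  · rintro ⟨h1, h2, h3, h4⟩ r hr
    simp only [dmsProg, Set.mem_insert_iff, Set.mem_singleton_iff] at hr
    rcases hr with rfl | rfl | rfl | rfl | rfl <;>
      intro _ _ <;> simp [GRule.fact, Set.insert_inter_of_mem,
        Set.singleton_inter_nonempty, Set.insert_inter_of_notMem] <;>
      first
        | exact h1
        | exact h2
        | exact h3
        | (rcases h4 with h | h
           · exact ⟨qa, by simp, h⟩
           · exact ⟨pa, by simp, h⟩)

lemma asets_dms (M : Set ExAtom) :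
    isAnswerSet dmsProg M ↔ (M = {mqa, mpa, edba, pa} ∨ M = {mqa, mpa, edba, qa}) := by
  constructor
  · rintro ⟨hmod, hmin⟩
    rw [reduct_dms] at hmod hmin
    obtain ⟨h1, h2, h3, h4⟩ := (model_dms_iff M).mp hmod
    rcases h4 with hq | hp
    · right
      have hsub : ({mqa, mpa, edba, qa} : Set ExAtom) ⊆ M := by
        intro x hx
        simp only [Set.mem_insert_iff, Set.mem_singleton_iff] at hx
        rcases hx with rfl | rfl | rfl | rfl <;> assumption
      have hm : isModel ({mqa, mpa, edba, qa} : Set ExAtom) dmsProg := by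
        rw [model_dms_iff]; simp
      exact (hmin _ hsub hm).symm
    · left
      have hsub : ({mqa, mpa, edba, pa} : Set ExAtom) ⊆ M := by
        intro x hx
        simp only [Set.mem_insert_iff, Set.mem_singleton_iff] at hx
        rcases hx with rfl | rfl | rfl | rfl <;> assumption
      have hm : isModel ({mqa, mpa, edba, pa} : Set ExAtom) dmsProg := by
        rw [model_dms_iff]; simp
      exact (hmin _ hsub hm).symm
  · intro h
    constructor
    · rw [reduct_dms, model_dms_iff]
      rcases h with rfl | rfl <;> simp
    · intro N hNsub hNmod
      rw [reduct_dms] at hNmod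
      obtain ⟨h1, h2, h3, h4⟩ := (model_dms_iff N).mp hNmod
      apply Set.Subset.antisymm hNsub
      rcases h with rfl | rfl
      · have hpa : pa ∈ N := by
          rcases h4 with hq | hp
          · exact absurd (hNsub hq) (by simp)
          · exact hp
        intro x hx
        simp only [Set.mem_insert_iff, Set.mem_singleton_iff] at hx
        rcases hx with rfl | rfl | rfl | rfl <;> assumption
      · have hqa : qa ∈ N := by
          rcases h4 with hq | hp
          · exact hq
          · exact absurd (hNsub hp) (by simp)
        intro x hx
        simp only [Set.mem_insert_iff, Set.mem_singleton_iff] at hx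
        rcases hx with rfl | rfl | rfl | rfl <;> assumption

lemma no_orig_qa : ¬ ∃ M : Set ExAtom, isAnswerSet origProg M ∧ qa ∈ M := by
  rintro ⟨M, ⟨hmod, hmin⟩, hqa⟩
  by_cases hco : coa ∈ M
  · -- reduct drops the co-rule; M \ {coa} is a smaller model
    set N : Set ExAtom := M \ {coa} with hN
    have hNsub : N ⊆ M := Set.diff_subset
    have hNmod : isModel N (reduct origProg M) := by
      rintro r ⟨s, hs, hneg, rfl⟩
      simp only [origProg, Set.mem_insert_iff, Set.mem_singleton_iff] at hs
      rcases hs with rfl | rfl | rfl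
      · intro _ _
        have := hmod (GRule.fact edba) ⟨GRule.fact edba, by simp [origProg], by simp [GRule.fact], rfl⟩
        simp only [satisfiesRule, GRule.fact, Set.empty_subset, Set.empty_inter,
          Set.singleton_inter_nonempty, forall_true_left] at this
        simp only [GRule.fact, Set.singleton_inter_nonempty]
        exact ⟨this, by simp⟩
      · intro hpos _
        have hedba : edba ∈ M := hNsub (hpos (by simp))
        have := hmod ⟨{qa, pa}, {edba}, ∅, Set.insert_nonempty _ _⟩
          ⟨⟨{qa, pa}, {edba}, ∅, Set.insert_nonempty _ _⟩, by simp [origProg], by simp, rfl⟩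
        simp only [satisfiesRule, Set.empty_inter, Set.singleton_subset_iff,
          forall_true_left] at this
        obtain ⟨x, hx1, hx2⟩ := this hedba
        refine ⟨x, hx1, hx2, ?_⟩
        simp only [Set.mem_insert_iff, Set.mem_singleton_iff] at hx1
        rcases hx1 with rfl | rfl <;> simp
      · exfalso
        rw [Set.singleton_inter_eq_empty] at hneg
        exact hneg hco
    have heq := hmin N hNsub hNmod
    have hnot : coa ∉ N := by simp [hN]
    rw [heq] at hnot
    exact hnot hco
  · -- the co-rule survives the reduct and forces coa ∈ M
    have hmem : (⟨{coa}, {qa}, ∅, Set.singleton_nonempty _⟩ : GRule ExAtom) ∈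
        reduct origProg M := by
      refine ⟨⟨{coa}, {qa}, {coa}, Set.singleton_nonempty _⟩, by simp [origProg], ?_, rfl⟩
      rwa [Set.singleton_inter_eq_empty]
    have := hmod _ hmem
    simp only [satisfiesRule, Set.empty_inter, Set.singleton_subset_iff,
      Set.singleton_inter_nonempty, forall_true_left] at this
    exact hco (this hqa)

/-- `DMS(q(a)?, P)` has exactly the two answer sets
`{magic_q^b(a), magic_p^b(a), edb(a), p(a)}` and
`{magic_q^b(a), magic_p^b(a), edb(a), q(a)}`; hence `q(a)` is a brave
consequence of `DMS(q(a)?, P)` but not of `P` (which is not super-consistent),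
so `DMS` is not sound for brave reasoning on non-super-consistent programs. -/
theorem dms_unsound_on_non_superConsistent :
    (∀ M : Set ExAtom, isAnswerSet dmsProg M ↔
      (M = {mqa, mpa, edba, pa} ∨ M = {mqa, mpa, edba, qa})) ∧
    (∃ M : Set ExAtom, isAnswerSet dmsProg M ∧ qa ∈ M) ∧
    ¬ (∃ M : Set ExAtom, isAnswerSet origProg M ∧ qa ∈ M) := by
  refine ⟨asets_dms, ⟨{mqa, mpa, edba, qa}, (asets_dms _).mpr (Or.inr rfl), by simp⟩, no_orig_qa⟩
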